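/- arXiv:2410.00531 — 2 statements merged into one kernel-verified Lean document; each statement's English description precedes it below -/
import Mathlib

section
/- Suppose t_attn + t_allreduce < τ_ffn (so the tight condition fails) but t_attn + t_ffn + 2t_allreduce ≥ τ_ffn + τ_attn and t_ffn + t_allreduce ≥ τ_attn. Then for all l ≥ 1, (l−1)·t_attn + l·t_ffn + (2l−1)·t_allreduce ≥ (l−1)·τ_ffn + l·τ_attn. -/
/-- Case 2 of the loose steady condition proof. -/
theorem loose_case2 (ta tf tr τa τf : ℝ)
    (hta : 0 ≤ ta) (htf : 0 ≤ tf) (htr : 0 ≤ tr) (hτa : 0 ≤ τa) (hτf : 0 ≤ τf)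
    (hfail : ta + tr < τf)
    (hsum : ta + tf + 2 * tr ≥ τf + τa)
    (h2 : tf + tr ≥ τa) :
    ∀ l : ℕ, 1 ≤ l →
      ((l : ℝ) - 1) * ta + (l : ℝ) * tf + (2 * (l : ℝ) - 1) * tr ≥
        ((l : ℝ) - 1) * τf + (l : ℝ) * τa := by
  intro l hl
  have h : (1 : ℝ) ≤ l := by exact_mod_cast hl
  nlinarith [mul_nonneg (sub_nonneg.mpr h) (sub_nonneg.mpr hsum)]
end

section
/- If the memory scheduler satisfies the tight steady condition t_attn + t_allreduce ≥ τ_ffn and t_ffn + t_allreduce ≥ τ_attn, then the recursively defined waiting slack t'_m (with t'_1 = t_attn + t_allreduce − τ_ffn and subsequent slacks t'_{m+1} = max{0, t'_m} + c_m + t_allreduce − τ_m, where c_m alternates between t_ffn and t_attn and τ_m alternates between τ_attn and τ_ffn) is nonnegative for every m ≥ 1, i.e., no computation is ever blocked by weight loading. -/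
/-- `slack ta tf tr τa τf n` is the waiting slack `t'_{n+1}` of the scheduler:
`t'_1 = ta + tr − τf` and `t'_{m+1} = max 0 t'_m + c_m + tr − τ_m`, where for odd `m`
`c_m = tf`, `τ_m = τa`, and for even `m` `c_m = ta`, `τ_m = τf`. -/
def slack (ta tf tr τa τf : ℝ) : ℕ → ℝ
  | 0 => ta + tr - τf
  | n + 1 => max 0 (slack ta tf tr τa τf n) +
      (if n % 2 = 0 then tf + tr - τa else ta + tr - τf)

/-- Under the tight steady condition, no computation is ever blocked. -/
theorem tight_implies_no_blocking (ta tf tr τa τf : ℝ)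
    (hta : 0 ≤ ta) (htf : 0 ≤ tf) (htr : 0 ≤ tr) (hτa : 0 ≤ τa) (hτf : 0 ≤ τf)
    (h1 : ta + tr ≥ τf) (h2 : tf + tr ≥ τa) :
    ∀ n : ℕ, slack ta tf tr τa τf n ≥ 0 := by
  intro n
  induction n with
  | zero => simp [slack]; linarith
  | succ n ih =>
    simp only [slack]
    have hm : (0:ℝ) ≤ max 0 (slack ta tf tr τa τf n) := le_max_left _ _
    split <;> linarith
end
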